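/- (Truncated V-fractional Taylor's formula.) Let n ≥ 0 be an integer and let f : (0,∞) → ℝ be (n+1) times α-differentiable with D_α^{n+1} f continuous on (0,∞). Then for all s, t > 0, f(t) = ∑_{k=0}^n (1/k!)·((t^α − s^α)/(λα))^k · D_α^k f(s) + (1/n!) ∫_s^t ((t^α − τ^α)/(λα))^n · D_α^{n+1} f(τ) dωτ. -/

import Mathlib

open Real Set MeasureTheory Filter

noncomputable def poch (x y : ℝ) : ℝ := Real.Gamma (x + y) / Real.Gamma x

noncomputable def vlam (γ β ρ δ p q : ℝ) : ℝ :=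
  (Real.Gamma β * poch ρ q) / (Real.Gamma (γ + β) * poch δ p)

/-- Truncated V-fractional derivative `D_α f t = λ t^(1-α) f' t`. -/
noncomputable def Dal (γ β ρ δ p q α : ℝ) (f : ℝ → ℝ) : ℝ → ℝ :=
  fun t => vlam γ β ρ δ p q * t ^ (1 - α) * deriv f t

/-- `f` is `k` times α-differentiable. -/
def alphaDiff (γ β ρ δ p q α : ℝ) (k : ℕ) (f : ℝ → ℝ) : Prop :=
  ∀ j < k, DifferentiableOn ℝ ((Dal γ β ρ δ p q α)^[j] f) (Set.Ioi 0)

/-- V-fractional integral `∫_a^b f dω = λ⁻¹ ∫_a^b f x · x^(α-1) dx`. -/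
noncomputable def VInt (γ β ρ δ p q α : ℝ) (a b : ℝ) (f : ℝ → ℝ) : ℝ :=
  (vlam γ β ρ δ p q)⁻¹ * ∫ x in a..b, f x * x ^ (α - 1)

/-- Truncated V-fractional Taylor remainder with `m` terms; `R_{n,f} = Rtay (n+1)`. -/
noncomputable def Rtay (γ β ρ δ p q α : ℝ) (m : ℕ) (f : ℝ → ℝ) (t s : ℝ) : ℝ :=
  f s - ∑ k ∈ Finset.range m,
    ((Dal γ β ρ δ p q α)^[k] f t / (Nat.factorial k : ℝ)) *
      ((s ^ α - t ^ α) / (vlam γ β ρ δ p q * α)) ^ k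

/-! With `ψ τ = τ ^ α / (λ α)` one has `ψ' τ = τ ^ (α - 1) / λ`, so `D_α g = g' / ψ'` and
`dωτ = ψ' τ dτ`: the formula is the classical Taylor formula with integral remainder taken
with respect to `ψ`. The derivative of `F τ = ∑_{k ≤ n} (ψ t - ψ τ) ^ k / k! · D_α^k f τ`
telescopes to `(ψ t - ψ τ) ^ n / n! · D_α^{n+1} f τ · ψ' τ`, and `F t = f t`, so integrating
`F'` over `[s, t]` gives the formula. -/

lemma poch_pos {x y : ℝ} (hx : 0 < x) (hy : 0 < y) : 0 < poch x y :=
  div_pos (Real.Gamma_pos_of_pos (by linarith)) (Real.Gamma_pos_of_pos hx)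

lemma vlam_pos {γ β ρ δ p q : ℝ} (hγ : 0 < γ) (hβ : 0 < β) (hρ : 0 < ρ) (hδ : 0 < δ)
    (hp : 0 < p) (hq : 0 < q) : 0 < vlam γ β ρ δ p q :=
  div_pos (mul_pos (Real.Gamma_pos_of_pos hβ) (poch_pos hρ hq))
    (mul_pos (Real.Gamma_pos_of_pos (by linarith)) (poch_pos hδ hp))

open Finset Nat in
lemma hasDerivAt_taylorSum {ψ : ℝ → ℝ} {g : ℕ → ℝ → ℝ} {x τ ψ' : ℝ}
    (hψ : HasDerivAt ψ ψ' τ) (n : ℕ) (hg : ∀ k ≤ n, HasDerivAt (g k) (g (k + 1) τ * ψ') τ) :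
    HasDerivAt (fun y => ∑ k ∈ range (n + 1), (ψ x - ψ y) ^ k / k ! * g k y)
      ((ψ x - ψ τ) ^ n / n ! * g (n + 1) τ * ψ') τ := by
  induction n with
  | zero => simpa using hg 0 le_rfl
  | succ n ih =>
    have hlast := (((hψ.const_sub (ψ x)).fun_pow (n + 1)).div_const ((n + 1)! : ℝ)).fun_mul
      (hg (n + 1) le_rfl)
    simp only [sum_range_succ _ (n + 1)]
    refine ((ih fun k hk => hg k (by omega)).fun_add hlast).congr_deriv ?_
    push_cast [factorial_succ]
    field_simp
    ring

open Finset Nat in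
theorem eq_taylorSum_add_integral {ψ ψ' : ℝ → ℝ} {g : ℕ → ℝ → ℝ} {n : ℕ}
    {s t : ℝ} (hψ : ∀ τ ∈ uIcc s t, HasDerivAt ψ (ψ' τ) τ)
    (hg : ∀ k ≤ n, ∀ τ ∈ uIcc s t, HasDerivAt (g k) (g (k + 1) τ * ψ' τ) τ)
    (hint : IntervalIntegrable (fun τ => (ψ t - ψ τ) ^ n * g (n + 1) τ * ψ' τ) volume s t) :
    g 0 t = ∑ k ∈ range (n + 1), (ψ t - ψ s) ^ k / k ! * g k s +
      (∫ τ in s..t, (ψ t - ψ τ) ^ n * g (n + 1) τ * ψ' τ) / n ! := by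
  have hF : ∀ τ ∈ uIcc s t, HasDerivAt
      (fun y => ∑ k ∈ range (n + 1), (ψ t - ψ y) ^ k / k ! * g k y)
      ((ψ t - ψ τ) ^ n * g (n + 1) τ * ψ' τ / n !) τ := fun τ hτ =>
    (hasDerivAt_taylorSum (hψ τ hτ) n fun k hk => hg k hk τ hτ).congr_deriv (by ring)
  rw [← intervalIntegral.integral_div,
    intervalIntegral.integral_eq_sub_of_hasDerivAt hF (hint.div_const _)]
  simp [sum_range_succ']

lemma hasDerivAt_rpow_div_mul {α c τ : ℝ} (hα : α ≠ 0) (hτ : 0 < τ) :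
    HasDerivAt (fun y => y ^ α / (c * α)) (τ ^ (α - 1) / c) τ :=
  ((hasDerivAt_rpow_const (Or.inl hτ.ne')).div_const (c * α)).congr_deriv (by field_simp)

section Dal

variable {γ β ρ δ p q α τ : ℝ}

lemma hasDerivAt_Dal_mul {g : ℝ → ℝ} (hL : vlam γ β ρ δ p q ≠ 0) (hτ : 0 < τ)
    (hg : DifferentiableAt ℝ g τ) :
    HasDerivAt g (Dal γ β ρ δ p q α g τ * (τ ^ (α - 1) / vlam γ β ρ δ p q)) τ := by
  have hpow : τ ^ (1 - α) * τ ^ (α - 1) = 1 := by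
    rw [← rpow_add hτ, sub_add_sub_cancel', sub_self, rpow_zero]
  refine hg.hasDerivAt.congr_deriv ?_
  calc deriv g τ = vlam γ β ρ δ p q / vlam γ β ρ δ p q * (τ ^ (1 - α) * τ ^ (α - 1)) *
        deriv g τ := by rw [div_self hL, hpow, one_mul, one_mul]
    _ = _ := by simp only [Dal]; ring

lemma hasDerivAt_iterate_Dal {m k : ℕ} {f : ℝ → ℝ} (hL : vlam γ β ρ δ p q ≠ 0)
    (hf : alphaDiff γ β ρ δ p q α m f) (hk : k < m) (hτ : 0 < τ) :
    HasDerivAt ((Dal γ β ρ δ p q α)^[k] f)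
      ((Dal γ β ρ δ p q α)^[k + 1] f τ * (τ ^ (α - 1) / vlam γ β ρ δ p q)) τ := by
  rw [Function.iterate_succ_apply']
  exact hasDerivAt_Dal_mul hL hτ ((hf k hk).differentiableAt (isOpen_Ioi.mem_nhds hτ))

end Dal

theorem stmt3_general (γ β ρ δ p q α : ℝ) (hγ : 0 < γ) (hβ : 0 < β) (hρ : 0 < ρ) (hδ : 0 < δ)
    (hp : 0 < p) (hq : 0 < q) (hα : 0 < α)
    (n : ℕ) (f : ℝ → ℝ)
    (hdiff : alphaDiff γ β ρ δ p q α (n + 1) f)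
    (hcont : ContinuousOn ((Dal γ β ρ δ p q α)^[n + 1] f) (Set.Ioi 0)) :
    ∀ s > (0 : ℝ), ∀ t > (0 : ℝ),
      f t = (∑ k ∈ Finset.range (n + 1),
          (1 / (Nat.factorial k : ℝ)) * ((t ^ α - s ^ α) / (vlam γ β ρ δ p q * α)) ^ k *
            (Dal γ β ρ δ p q α)^[k] f s) +
        (1 / (Nat.factorial n : ℝ)) * VInt γ β ρ δ p q α s t
          (fun τ => ((t ^ α - τ ^ α) / (vlam γ β ρ δ p q * α)) ^ n * (Dal γ β ρ δ p q α)^[n + 1] f τ) := by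
  intro s hs t ht
  set L := vlam γ β ρ δ p q
  set D := Dal γ β ρ δ p q α
  have hL : L ≠ 0 := (vlam_pos hγ hβ hρ hδ hp hq).ne'
  have hpos : uIcc s t ⊆ Ioi 0 := fun τ hτ => (lt_min hs ht).trans_le hτ.1
  have hψ : ∀ τ ∈ uIcc s t, HasDerivAt (fun y => y ^ α / (L * α)) (τ ^ (α - 1) / L) τ :=
    fun τ hτ => hasDerivAt_rpow_div_mul hα.ne' (hpos hτ)
  have hg : ∀ k ≤ n, ∀ τ ∈ uIcc s t,
      HasDerivAt (D^[k] f) (D^[k + 1] f τ * (τ ^ (α - 1) / L)) τ :=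
    fun k hk τ hτ => hasDerivAt_iterate_Dal hL hdiff (Nat.lt_succ_of_le hk) (hpos hτ)
  have hintegrand : ContinuousOn (fun τ => (t ^ α / (L * α) - τ ^ α / (L * α)) ^ n *
      D^[n + 1] f τ * (τ ^ (α - 1) / L)) (uIcc s t) := by
    have hrpow (r : ℝ) : ContinuousOn (fun τ : ℝ => τ ^ r) (uIcc s t) :=
      continuousOn_id.rpow_const fun τ hτ => Or.inl (hpos hτ).ne'
    exact (((continuousOn_const.sub ((hrpow α).div_const _)).pow n).mul (hcont.mono hpos)).mul
      ((hrpow (α - 1)).div_const L)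
  refine (eq_taylorSum_add_integral (g := fun k => D^[k] f) hψ hg
    hintegrand.intervalIntegrable).trans ?_
  simp only [VInt, ← sub_div]
  rw [← intervalIntegral.integral_div, ← intervalIntegral.integral_const_mul,
    ← intervalIntegral.integral_const_mul]
  congr 1
  · exact Finset.sum_congr rfl fun k _ => by ring
  · exact intervalIntegral.integral_congr fun τ _ => by ring

theorem stmt3 (γ β ρ δ p q α : ℝ) (hγ : 0 < γ) (hβ : 0 < β) (hρ : 0 < ρ) (hδ : 0 < δ)
    (hp : 0 < p) (hq : 0 < q) (hα : 0 < α) (hα1 : α ≤ 1)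
    (n : ℕ) (f : ℝ → ℝ)
    (hdiff : alphaDiff γ β ρ δ p q α (n + 1) f)
    (hcont : ContinuousOn ((Dal γ β ρ δ p q α)^[n + 1] f) (Set.Ioi 0)) :
    ∀ s > (0 : ℝ), ∀ t > (0 : ℝ),
      f t = (∑ k ∈ Finset.range (n + 1),
          (1 / (Nat.factorial k : ℝ)) * ((t ^ α - s ^ α) / (vlam γ β ρ δ p q * α)) ^ k *
            (Dal γ β ρ δ p q α)^[k] f s) +
        (1 / (Nat.factorial n : ℝ)) * VInt γ β ρ δ p q α s t
          (fun τ => ((t ^ α - τ ^ α) / (vlam γ β ρ δ p q * α)) ^ n * (Dal γ β ρ δ p q α)^[n + 1] f τ) :=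
  stmt3_general γ β ρ δ p q α hγ hβ hρ hδ hp hq hα n f hdiff hcont
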